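/- arXiv:2208.00041 — 9 statements merged into one kernel-verified Lean document; each statement's English description precedes it below -/
import Mathlib

section
/- Let 1 < α < 2 < β be irrationals with 1/α + 1/β = 1. Define Δ²(n) = (⌊(n+1)β⌋ - ⌊nβ⌋) - (⌊(n+1)α⌋ - ⌊nα⌋). Then Δ²(n) ≥ 0 for all n ≥ 0. -/
theorem stmt_5 (α β : ℝ) (hiα : Irrational α) (hiβ : Irrational β)
    (h1 : 1 < α) (h2 : α < 2) (h3 : 2 < β) (hab : 1 / α + 1 / β = 1) :
    ∀ n : ℕ,
      0 ≤ (⌊((n : ℝ) + 1) * β⌋ - ⌊(n : ℝ) * β⌋) - (⌊((n : ℝ) + 1) * α⌋ - ⌊(n : ℝ) * α⌋) := by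
  intro n
  have hn : (0:ℝ) ≤ n := n.cast_nonneg
  have A : ⌊(n : ℝ) * β⌋ + 2 ≤ ⌊((n : ℝ) + 1) * β⌋ := by
    have h : (n : ℝ) * β + (2:ℤ) ≤ ((n : ℝ) + 1) * β := by push_cast; nlinarith
    calc ⌊(n : ℝ) * β⌋ + 2 = ⌊(n : ℝ) * β + (2:ℤ)⌋ := (Int.floor_add_intCast _ _).symm
      _ ≤ ⌊((n : ℝ) + 1) * β⌋ := Int.floor_le_floor h
  have B : ⌊((n : ℝ) + 1) * α⌋ ≤ ⌊(n : ℝ) * α⌋ + 2 := by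
    have h : ((n : ℝ) + 1) * α ≤ (n : ℝ) * α + (2:ℤ) := by push_cast; nlinarith
    calc ⌊((n : ℝ) + 1) * α⌋ ≤ ⌊(n : ℝ) * α + (2:ℤ)⌋ := Int.floor_le_floor h
      _ = ⌊(n : ℝ) * α⌋ + 2 := Int.floor_add_intCast _ _
  omega
end

section
/- Let 1 < α < 2 < β be irrationals with 1/α + 1/β = 1, and define Δ²(n) = (⌊(n+1)β⌋ - ⌊nβ⌋) - (⌊(n+1)α⌋ - ⌊nα⌋). If the sequence Δ² is constant, then its constant value is ⌊β⌋ - 1 and α = (2 - t + √(t²+4))/2 where t = ⌊β⌋ - 1. -/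
theorem stmt_6 (α β : ℝ) (hiα : Irrational α) (hiβ : Irrational β)
    (h1 : 1 < α) (h2 : α < 2) (h3 : 2 < β) (hab : 1 / α + 1 / β = 1)
    (Δ : ℕ → ℤ)
    (hΔ : ∀ n : ℕ, Δ n =
      (⌊((n : ℝ) + 1) * β⌋ - ⌊(n : ℝ) * β⌋) - (⌊((n : ℝ) + 1) * α⌋ - ⌊(n : ℝ) * α⌋))
    (hconst : ∀ m n : ℕ, Δ m = Δ n) :
    (∀ n : ℕ, Δ n = ⌊β⌋ - 1) ∧
      α = (2 - ((⌊β⌋ : ℝ) - 1) + Real.sqrt (((⌊β⌋ : ℝ) - 1)^2 + 4)) / 2 := by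
  have hα1 : ⌊α⌋ = 1 := by
    rw [Int.floor_eq_iff]
    constructor <;> push_cast <;> linarith
  have hβ2 : (2:ℤ) ≤ ⌊β⌋ := by
    rw [Int.le_floor]; push_cast; linarith
  have hΔ0 : Δ 0 = ⌊β⌋ - 1 := by
    have h := hΔ 0
    norm_num at h
    rw [h, hα1]
  have hall : ∀ n : ℕ, Δ n = ⌊β⌋ - 1 := fun n => (hconst n 0).trans hΔ0
  refine ⟨hall, ?_⟩
  -- telescoping
  have htel : ∀ k : ℕ, ⌊(k:ℝ) * β⌋ - ⌊(k:ℝ) * α⌋ = (⌊β⌋ - 1) * k := by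
    intro k
    induction k with
    | zero => norm_num
    | succ n ih =>
      have h := hΔ n
      rw [hall n] at h
      push_cast
      have e : (⌊β⌋ - 1) * ((n:ℤ) + 1) = (⌊β⌋ - 1) * (n:ℤ) + (⌊β⌋ - 1) := by ring
      rw [e, ← ih]
      omega
  -- β = α + (⌊β⌋ - 1)
  set c : ℝ := (⌊β⌋ : ℝ) - 1 with hc
  have key : ∀ k : ℕ, |(k:ℝ) * (β - α - c)| < 1 := by
    intro k
    have ht := htel k
    have htr : ((⌊(k:ℝ)*β⌋ : ℝ) - (⌊(k:ℝ)*α⌋ : ℝ)) = ((⌊β⌋:ℝ) - 1) * k := by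
      exact_mod_cast ht
    have e : (k:ℝ) * (β - α - c) =
        ((k:ℝ)*β - (⌊(k:ℝ)*β⌋ : ℝ)) - ((k:ℝ)*α - (⌊(k:ℝ)*α⌋ : ℝ)) := by
      rw [hc]; linear_combination htr
    have b1 := Int.fract_nonneg ((k:ℝ)*β)
    have b2 := Int.fract_lt_one ((k:ℝ)*β)
    have b3 := Int.fract_nonneg ((k:ℝ)*α)
    have b4 := Int.fract_lt_one ((k:ℝ)*α)
    rw [Int.fract] at b1 b2 b3 b4
    rw [e, abs_lt]
    constructor <;> linarith
  have hd : β - α - c = 0 := by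
    by_contra hne
    have hdpos : 0 < |β - α - c| := abs_pos.mpr hne
    obtain ⟨k, hk⟩ := exists_nat_gt (1 / |β - α - c|)
    have hk1 : (1:ℝ) < (k:ℝ) * |β - α - c| := by
      rwa [div_lt_iff₀ hdpos] at hk
    have := key k
    rw [abs_mul, abs_of_nonneg (by positivity : (0:ℝ) ≤ (k:ℝ))] at this
    linarith
  have hβeq : β = α + c := by linarith
  -- quadratic
  have hα0 : α ≠ 0 := by linarith
  have hβ0 : β ≠ 0 := by linarith
  have habm : β + α = α * β := by
    field_simp at hab; linarith
  have hquad : α ^ 2 = (2 - c) * α + c := by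
    rw [hβeq] at habm; nlinarith
  have hc1 : (1:ℝ) ≤ c := by
    rw [hc]
    have : (2:ℝ) ≤ (⌊β⌋ : ℝ) := by exact_mod_cast hβ2
    linarith
  have hsq : c ^ 2 + 4 = (2 * α + c - 2) ^ 2 := by nlinarith
  rw [hsq, Real.sqrt_sq (by linarith)]
  ring
end

section
/- Let 1 < α < 2 < β be irrationals with 1/α + 1/β = 1, and define Δ²(n) = (⌊(n+1)β⌋ - ⌊nβ⌋) - (⌊(n+1)α⌋ - ⌊nα⌋). If Δ² is monotone (nondecreasing or nonincreasing as a function of n), then Δ² is constant. -/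
lemma aux7 (α β : ℝ) (Δ : ℕ → ℤ)
    (hΔ : ∀ n : ℕ, Δ n =
      (⌊((n : ℝ) + 1) * β⌋ - ⌊(n : ℝ) * β⌋) - (⌊((n : ℝ) + 1) * α⌋ - ⌊(n : ℝ) * α⌋))
    (c : ℤ) (K : ℕ) (hc : ∀ n, K ≤ n → Δ n = c) :
    ∀ m n : ℕ, Δ m = Δ n := by
  set D : ℤ := ⌊(K : ℝ) * β⌋ - ⌊(K : ℝ) * α⌋ - c * K with hD
  have key : ∀ N : ℕ, K ≤ N → (⌊(N : ℝ) * β⌋ - ⌊(N : ℝ) * α⌋) = c * N + D := by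
    intro N hN
    induction N, hN using Nat.le_induction with
    | base => rw [hD]; ring
    | succ n hn ih =>
      have h := hΔ n
      rw [hc n hn] at h
      have hcast : ((n + 1 : ℕ) : ℝ) = (n : ℝ) + 1 := by push_cast; ring
      rw [hcast]
      push_cast
      linarith [h, ih]
  have hβα : β - α = (c : ℝ) := by
    by_contra hne
    have hε : 0 < |β - α - (c : ℝ)| := abs_pos.mpr (sub_ne_zero.mpr hne)
    obtain ⟨M, hM⟩ := exists_nat_gt ((|(D : ℝ)| + 1) / |β - α - (c : ℝ)|)
    set N := max M K with hN
    have hNK : K ≤ N := le_max_right _ _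
    have hkey := key N hNK
    have hkeyR : ((⌊(N : ℝ) * β⌋ : ℝ) - (⌊(N : ℝ) * α⌋ : ℝ)) = (c : ℝ) * N + (D : ℝ) := by
      exact_mod_cast hkey
    have f1 := Int.floor_le ((N : ℝ) * β)
    have f2 := Int.lt_floor_add_one ((N : ℝ) * β)
    have g1 := Int.floor_le ((N : ℝ) * α)
    have g2 := Int.lt_floor_add_one ((N : ℝ) * α)
    have hDa1 := le_abs_self (D : ℝ)
    have hDa2 := neg_abs_le (D : ℝ)
    have habs : |(N : ℝ) * (β - α - (c : ℝ))| ≤ |(D : ℝ)| + 1 := by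
      rw [abs_le]
      constructor <;> nlinarith [hkeyR]
    have hMN : (M : ℝ) ≤ (N : ℝ) := Nat.cast_le.mpr (le_max_left _ _)
    rw [div_lt_iff₀ hε] at hM
    rw [abs_mul, abs_of_nonneg (Nat.cast_nonneg N)] at habs
    nlinarith [mul_le_mul_of_nonneg_right hMN hε.le]
  have hb : β = α + (c : ℝ) := by linarith
  have hfloor : ∀ n : ℕ, ⌊(n : ℝ) * β⌋ = ⌊(n : ℝ) * α⌋ + n * c := by
    intro n
    have h : (n : ℝ) * β = (n : ℝ) * α + ((n * c : ℤ) : ℝ) := by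
      rw [hb]; push_cast; ring
    rw [h, Int.floor_add_intCast]
  have hfloor' : ∀ n : ℕ, ⌊((n : ℝ) + 1) * β⌋ = ⌊((n : ℝ) + 1) * α⌋ + (n + 1) * c := by
    intro n
    have h := hfloor (n + 1)
    have hcast : ((n + 1 : ℕ) : ℝ) = (n : ℝ) + 1 := by push_cast; ring
    rw [hcast] at h
    push_cast at h ⊢
    omega
  have hconst : ∀ n, Δ n = c := by
    intro n
    rw [hΔ n, hfloor' n, hfloor n]
    ring
  intro m n; rw [hconst m, hconst n]

theorem stmt_7 (α β : ℝ) (hiα : Irrational α) (hiβ : Irrational β)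
    (h1 : 1 < α) (h2 : α < 2) (h3 : 2 < β) (hab : 1 / α + 1 / β = 1)
    (Δ : ℕ → ℤ)
    (hΔ : ∀ n : ℕ, Δ n =
      (⌊((n : ℝ) + 1) * β⌋ - ⌊(n : ℝ) * β⌋) - (⌊((n : ℝ) + 1) * α⌋ - ⌊(n : ℝ) * α⌋))
    (hmono : Monotone Δ ∨ Antitone Δ) :
    ∀ m n : ℕ, Δ m = Δ n := by
  have hbound : ∀ n : ℕ, β - α - 2 ≤ (Δ n : ℝ) ∧ (Δ n : ℝ) ≤ β - α + 2 := by
    intro n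
    rw [hΔ n]
    push_cast
    have f1 := Int.floor_le ((n : ℝ) * β)
    have f2 := Int.lt_floor_add_one ((n : ℝ) * β)
    have f3 := Int.floor_le (((n : ℝ) + 1) * β)
    have f4 := Int.lt_floor_add_one (((n : ℝ) + 1) * β)
    have g1 := Int.floor_le ((n : ℝ) * α)
    have g2 := Int.lt_floor_add_one ((n : ℝ) * α)
    have g3 := Int.floor_le (((n : ℝ) + 1) * α)
    have g4 := Int.lt_floor_add_one (((n : ℝ) + 1) * α)
    constructor <;> nlinarith
  rcases hmono with hm | hm
  · obtain ⟨c, ⟨K, hK⟩, hmax⟩ :=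
      Int.exists_greatest_of_bdd (P := fun z => ∃ n, Δ n = z)
        ⟨⌈β - α + 2⌉, by
          rintro z ⟨n, rfl⟩
          have h := (hbound n).2
          have h2 : (Δ n : ℝ) ≤ (⌈β - α + 2⌉ : ℝ) := le_trans h (Int.le_ceil _)
          exact_mod_cast h2⟩
        ⟨Δ 0, 0, rfl⟩
    exact aux7 α β Δ hΔ c K (fun n hn =>
      le_antisymm (hmax _ ⟨n, rfl⟩) (hK ▸ hm hn))
  · obtain ⟨c, ⟨K, hK⟩, hmin⟩ :=
      Int.exists_least_of_bdd (P := fun z => ∃ n, Δ n = z)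
        ⟨⌊β - α - 2⌋, by
          rintro z ⟨n, rfl⟩
          have h := (hbound n).1
          have h2 : ((⌊β - α - 2⌋ : ℤ) : ℝ) ≤ (Δ n : ℝ) := le_trans (Int.floor_le _) h
          exact_mod_cast h2⟩
        ⟨Δ 0, 0, rfl⟩
    exact aux7 α β Δ hΔ c K (fun n hn =>
      le_antisymm (hK ▸ hm hn) (hmin _ ⟨n, rfl⟩))
end

section
/- Let 1 < α < 2 < β be irrationals with 1/α + 1/β = 1. If the fractional parts of α and β are equal, then α = (2 - t + √(t²+4))/2 where t = ⌊β⌋ - 1. -/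
theorem stmt_8 (α β : ℝ) (hiα : Irrational α) (hiβ : Irrational β)
    (h1 : 1 < α) (h2 : α < 2) (h3 : 2 < β) (hab : 1 / α + 1 / β = 1)
    (hfract : Int.fract α = Int.fract β) :
    α = (2 - ((⌊β⌋ : ℝ) - 1) + Real.sqrt (((⌊β⌋ : ℝ) - 1)^2 + 4)) / 2 := by
  set t : ℝ := (⌊β⌋ : ℝ) - 1 with ht
  have hα0 : α ≠ 0 := by linarith
  have hβ0 : β ≠ 0 := by linarith
  have hfa : ⌊α⌋ = 1 := by
    apply Int.floor_eq_iff.mpr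
    constructor <;> push_cast <;> linarith
  have hfract' : α - 1 = β - ⌊β⌋ := by
    have := hfract
    rw [Int.fract, Int.fract, hfa] at this
    push_cast at this
    linarith
  have hβ : β = α - 1 + (⌊β⌋ : ℝ) := by linarith
  -- from hab : β + α = α * β
  have hmul : β + α = α * β := by
    field_simp at hab; linarith
  have hquad : α ^ 2 = (2 - t) * α + t := by
    rw [hβ] at hmul; ring_nf at hmul ⊢; nlinarith [hmul]
  have ht1 : 1 ≤ t := by
    have : (2 : ℤ) ≤ ⌊β⌋ := by
      have := Int.le_floor.mpr (le_of_lt h3)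
      exact_mod_cast this
    have : (2 : ℝ) ≤ (⌊β⌋ : ℝ) := by exact_mod_cast this
    linarith
  have hsq : t ^ 2 + 4 = (2 * α + t - 2) ^ 2 := by nlinarith [hquad]
  have hpos : 0 ≤ 2 * α + t - 2 := by linarith
  rw [hsq, Real.sqrt_sq hpos]
  ring
end

section
/- Suppose 1 < α < 2 is irrational, β = α/(α-1) with ⌊β⌋ = 4, and positive integers p, q satisfy p{β} + q(1 - {α}) = 1. Then qα² + (3p - 3q + 1)α + (2q - 4p - 1) = 0, and hence α = (√(4pq + (q - 3p - 1)²) + 3q - 3p - 1)/(2q). -/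
/-!
Since `⌊α⌋ = 1` and `⌊β⌋ = 4`, the relation reads `p (α/(α-1) - 4) + q (2 - α) = 1`; clearing the
denominator `α - 1` gives the quadratic. As `p {β} ≥ 0`, the relation also forces `q (2 - α) ≤ 1`,
which places `α` at or beyond the vertex of the parabola, so it is the larger root.
-/

theorem Int.fract_eq_sub_of_floor_eq {R : Type*} [Ring R] [LinearOrder R] [FloorRing R]
    {x : R} {n : ℤ} (h : ⌊x⌋ = n) : Int.fract x = x - n := by
  rw [← Int.self_sub_floor, h]

theorem quadratic_of_fract_relation {α p q : ℝ} (hα : α ≠ 1)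
    (h : p * (α / (α - 1) - 4) + q * (1 - (α - 1)) = 1) :
    q * α ^ 2 + (3 * p - 3 * q + 1) * α + (2 * q - 4 * p - 1) = 0 := by
  have hα' : α - 1 ≠ 0 := sub_ne_zero.2 hα
  field_simp at h
  linear_combination -h

theorem eq_larger_root_of_quadratic_eq_zero {a b c x : ℝ} (ha : 0 < a)
    (h : a * x ^ 2 + b * x + c = 0) (hx : 0 ≤ 2 * a * x + b) :
    x = (Real.sqrt (discrim a b c) - b) / (2 * a) := by
  rw [discrim_eq_sq_of_quadratic_eq_zero (x := x) (by linear_combination h), Real.sqrt_sq hx]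
  field_simp
  ring

theorem stmt_11_general (α : ℝ) (h1 : 1 < α) (h2 : α < 2)
    (β : ℝ) (hβ : β = α / (α - 1)) (hfl : ⌊β⌋ = 4)
    (p q : ℕ) (hq : 0 < q)
    (heq : (p : ℝ) * Int.fract β + (q : ℝ) * (1 - Int.fract α) = 1) :
    (q : ℝ) * α^2 + (3 * (p : ℝ) - 3 * q + 1) * α + (2 * (q : ℝ) - 4 * p - 1) = 0 ∧
      α = (Real.sqrt (4 * p * q + ((q : ℝ) - 3 * p - 1)^2) + 3 * (q : ℝ) - 3 * p - 1) / (2 * q) := by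
  have hfα : Int.fract α = α - 1 := by
    have : ⌊α⌋ = 1 := Int.floor_eq_iff.2 ⟨by norm_num [h1.le], by norm_num [h2]⟩
    exact_mod_cast Int.fract_eq_sub_of_floor_eq this
  have hfβ : Int.fract β = β - 4 := Int.fract_eq_sub_of_floor_eq hfl
  have hquad := quadratic_of_fract_relation h1.ne' (by rwa [hfα, hfβ, hβ] at heq)
  have hq' : (0 : ℝ) < q := by exact_mod_cast hq
  have hnear_two : (q : ℝ) * (2 - α) ≤ 1 := by
    have : 0 ≤ (p : ℝ) * Int.fract β := mul_nonneg p.cast_nonneg (Int.fract_nonneg β)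
    rw [hfα] at heq
    linarith
  refine ⟨hquad, ?_⟩
  rw [eq_larger_root_of_quadratic_eq_zero hq' hquad (by nlinarith [p.cast_nonneg (α := ℝ)]), discrim]
  ring_nf

theorem stmt_11 (α : ℝ) (hiα : Irrational α) (h1 : 1 < α) (h2 : α < 2)
    (β : ℝ) (hβ : β = α / (α - 1)) (hfl : ⌊β⌋ = 4)
    (p q : ℕ) (hp : 0 < p) (hq : 0 < q)
    (heq : (p : ℝ) * Int.fract β + (q : ℝ) * (1 - Int.fract α) = 1) :
    (q : ℝ) * α^2 + (3 * (p : ℝ) - 3 * q + 1) * α + (2 * (q : ℝ) - 4 * p - 1) = 0 ∧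
      α = (Real.sqrt (4 * p * q + ((q : ℝ) - 3 * p - 1)^2) + 3 * (q : ℝ) - 3 * p - 1) / (2 * q) :=
  stmt_11_general α h1 h2 β hβ hfl p q hq heq
end

section
/- Let f : ℤ → ℤ with f ≥ 0 and f(1) ≥ 1, and define a₀ = b₀ = 0, and for n ≥ 1: aₙ = mex{aₖ, bₖ : k < n} and bₙ = f(aₙ) + b_{n-1} + aₙ - a_{n-1}. Then the sequences (aₙ)_{n≥1} and (bₙ)_{n≥1} are strictly increasing, the sequence (bₙ - aₙ) is nondecreasing, and the union {aₙ : n ≥ 0} ∪ {bₙ : n ≥ 0} equals the set of all nonnegative integers. -/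
/-- The minimum excluded value of a set of integers: the least nonnegative
integer not belonging to the set. -/
noncomputable def mex (S : Set ℤ) : ℤ := (sInf {m : ℕ | (m : ℤ) ∉ S} : ℕ)

lemma mex_nonneg (S : Set ℤ) : 0 ≤ mex S := Int.ofNat_nonneg _

lemma exists_nat_not_mem {S : Set ℤ} (hS : S.Finite) : ∃ m : ℕ, (m : ℤ) ∉ S := by
  by_contra h
  push_neg at h
  have hsub : Set.range ((↑) : ℕ → ℤ) ⊆ S := by rintro x ⟨m, rfl⟩; exact h m
  exact (Set.infinite_range_of_injective Nat.cast_injective) (hS.subset hsub)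

lemma mex_not_mem {S : Set ℤ} (hS : S.Finite) : mex S ∉ S := by
  obtain ⟨m, hm⟩ := exists_nat_not_mem hS
  exact Nat.sInf_mem (⟨m, hm⟩ : {m : ℕ | (m : ℤ) ∉ S}.Nonempty)

lemma mex_le {S : Set ℤ} {m : ℕ} (hm : (m : ℤ) ∉ S) : mex S ≤ (m : ℤ) := by
  unfold mex
  exact_mod_cast Nat.sInf_le (show m ∈ {k : ℕ | (k : ℤ) ∉ S} from hm)

lemma mex_mono {S T : Set ℤ} (hT : T.Finite) (hst : S ⊆ T) : mex S ≤ mex T := by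
  have h := mex_not_mem hT
  exact mex_le (fun hx => h (hst hx))

theorem stmt_16 (f : ℤ → ℤ) (hf : ∀ m : ℤ, 0 ≤ f m) (hf1 : 1 ≤ f 1)
    (a b : ℕ → ℤ) (ha0 : a 0 = 0) (hb0 : b 0 = 0)
    (hrec : ∀ n : ℕ, 0 < n →
      a n = mex {x : ℤ | ∃ k < n, x = a k ∨ x = b k} ∧
      b n = f (a n) + b (n - 1) + a n - a (n - 1)) :
    (∀ m n : ℕ, 1 ≤ m → m < n → a m < a n) ∧
    (∀ m n : ℕ, 1 ≤ m → m < n → b m < b n) ∧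
    (∀ m n : ℕ, m ≤ n → b m - a m ≤ b n - a n) ∧
    ({x : ℤ | ∃ n : ℕ, x = a n} ∪ {x : ℤ | ∃ n : ℕ, x = b n} = {x : ℤ | 0 ≤ x}) := by
  set S : ℕ → Set ℤ := fun n => {x : ℤ | ∃ k < n, x = a k ∨ x = b k} with hSdef
  have hSfin : ∀ n, (S n).Finite := by
    intro n
    apply Set.Finite.subset (((Set.finite_Iio n).image a).union ((Set.finite_Iio n).image b))
    rintro x ⟨k, hk, h | h⟩
    · exact Or.inl ⟨k, hk, h.symm⟩
    · exact Or.inr ⟨k, hk, h.symm⟩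
  have hamem : ∀ k n, k < n → a k ∈ S n := fun k n hk => ⟨k, hk, Or.inl rfl⟩
  have hbmem : ∀ k n, k < n → b k ∈ S n := fun k n hk => ⟨k, hk, Or.inr rfl⟩
  have hSmono : ∀ m n : ℕ, m ≤ n → S m ⊆ S n := by
    rintro m n hmn x ⟨k, hk, h⟩
    exact ⟨k, lt_of_lt_of_le hk hmn, h⟩
  have ha_nonneg : ∀ n, 0 ≤ a n := by
    intro n
    rcases Nat.eq_zero_or_pos n with h | h
    · simp [h, ha0]
    · rw [(hrec n h).1]; exact mex_nonneg _
  have ha1 : 1 ≤ a 1 := by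
    have h1 := (hrec 1 one_pos).1
    have hne : a 1 ≠ 0 := by
      rw [h1]
      intro h
      have hnm := mex_not_mem (hSfin 1)
      rw [h] at hnm
      exact hnm (ha0 ▸ hamem 0 1 one_pos)
    have := ha_nonneg 1
    omega
  have ha_step : ∀ n : ℕ, 1 ≤ n → a n < a (n + 1) := by
    intro n hn
    have h1 := (hrec n hn).1
    have h2 := (hrec (n + 1) (by omega)).1
    have hle : a n ≤ a (n + 1) := by
      rw [h1, h2]
      exact mex_mono (hSfin (n + 1)) (hSmono n (n + 1) (by omega))
    have hne : a (n + 1) ≠ a n := by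
      intro h
      have hnm := mex_not_mem (hSfin (n + 1))
      rw [← h2, h] at hnm
      exact hnm (hamem n (n + 1) (by omega))
    exact lt_of_le_of_ne hle (Ne.symm hne)
  have ha_step0 : ∀ n : ℕ, a n < a (n + 1) := by
    intro n
    rcases Nat.eq_zero_or_pos n with h | h
    · subst h; rw [zero_add, ha0]; omega
    · exact ha_step n h
  have ha_lt : ∀ m n : ℕ, m < n → a m < a n := by
    intro m n hmn
    induction n with
    | zero => omega
    | succ k ih =>
      rcases Nat.lt_succ_iff_lt_or_eq.mp hmn with h | h
      · exact lt_trans (ih h) (ha_step0 k)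
      · subst h; exact ha_step0 m
  have hb_step : ∀ n : ℕ, b n < b (n + 1) := by
    intro n
    have hr := (hrec (n + 1) (Nat.succ_pos n)).2
    simp only [Nat.add_sub_cancel] at hr
    have h1 := hf (a (n + 1))
    have h2 := ha_step0 n
    omega
  have hb_lt : ∀ m n : ℕ, m < n → b m < b n := by
    intro m n hmn
    induction n with
    | zero => omega
    | succ k ih =>
      rcases Nat.lt_succ_iff_lt_or_eq.mp hmn with h | h
      · exact lt_trans (ih h) (hb_step k)
      · subst h; exact hb_step m
  have hba_step : ∀ n : ℕ, b n - a n ≤ b (n + 1) - a (n + 1) := by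
    intro n
    have hr := (hrec (n + 1) (Nat.succ_pos n)).2
    simp only [Nat.add_sub_cancel] at hr
    have h1 := hf (a (n + 1))
    omega
  have hba : ∀ m n : ℕ, m ≤ n → b m - a m ≤ b n - a n := by
    intro m n hmn
    induction n with
    | zero =>
      obtain rfl := Nat.le_zero.mp hmn
      exact le_rfl
    | succ k ih =>
      rcases Nat.le_succ_iff.mp hmn with h | h
      · exact le_trans (ih h) (hba_step k)
      · subst h; exact le_rfl
  have han : ∀ n : ℕ, (n : ℤ) ≤ a n := by
    intro n
    induction n with
    | zero => simp [ha0]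
    | succ k ih =>
      have := ha_step0 k
      push_cast
      omega
  have hb_nonneg : ∀ n, 0 ≤ b n := by
    intro n
    rcases Nat.eq_zero_or_pos n with h | h
    · simp [h, hb0]
    · have := hb_lt 0 n h
      omega
  refine ⟨fun m n _ h => ha_lt m n h, fun m n _ h => hb_lt m n h, hba, ?_⟩
  ext x
  simp only [Set.mem_union, Set.mem_setOf_eq]
  constructor
  · rintro (⟨n, rfl⟩ | ⟨n, rfl⟩)
    · exact ha_nonneg n
    · exact hb_nonneg n
  · intro hx
    by_contra h
    push_neg at h
    obtain ⟨h1, h2⟩ := h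
    lift x to ℕ using hx with m
    have hxm : (m : ℤ) ∉ S (m + 1) := by
      rintro ⟨k, hk, hc | hc⟩
      · exact h1 k hc
      · exact h2 k hc
    have hle : a (m + 1) ≤ (m : ℤ) := by
      rw [(hrec (m + 1) (Nat.succ_pos m)).1]
      exact mex_le hxm
    have := han (m + 1)
    push_cast at this
    omega
end

section
/- Let 1 < α < 2 < β be irrational with 1/α + 1/β = 1, and let f be the Beatty constraint function defined by f(⌊nα⌋) = f(⌊nβ⌋) = (⌊nβ⌋ - ⌊(n-1)β⌋) - (⌊nα⌋ - ⌊(n-1)α⌋) for n ≥ 1. Then f(1) = ⌊β⌋ - 1 ≥ 1 and f takes only values in {⌊β⌋-2, ⌊β⌋-1, ⌊β⌋}; in particular f ≥ 0. -/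
lemma floor_add_bounds (a b : ℝ) :
    ⌊a⌋ + ⌊b⌋ ≤ ⌊a + b⌋ ∧ ⌊a + b⌋ ≤ ⌊a⌋ + ⌊b⌋ + 1 := by
  constructor
  · apply Int.le_floor.mpr
    push_cast
    exact add_le_add (Int.floor_le a) (Int.floor_le b)
  · have h1 := Int.lt_floor_add_one a
    have h2 := Int.lt_floor_add_one b
    have : a + b < ((⌊a⌋ + ⌊b⌋ + 1 + 1 : ℤ) : ℝ) := by push_cast; linarith
    exact Int.le_of_lt_add_one (Int.floor_lt.mpr this)

theorem stmt_17 (α β : ℝ) (hiα : Irrational α) (hiβ : Irrational β)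
    (h1 : 1 < α) (h2 : α < 2) (h3 : 2 < β) (hab : 1 / α + 1 / β = 1)
    (f : ℤ → ℤ)
    (hfa : ∀ n : ℕ, 1 ≤ n → f ⌊(n : ℝ) * α⌋ =
      (⌊(n : ℝ) * β⌋ - ⌊((n : ℝ) - 1) * β⌋) - (⌊(n : ℝ) * α⌋ - ⌊((n : ℝ) - 1) * α⌋))
    (hfb : ∀ n : ℕ, 1 ≤ n → f ⌊(n : ℝ) * β⌋ =
      (⌊(n : ℝ) * β⌋ - ⌊((n : ℝ) - 1) * β⌋) - (⌊(n : ℝ) * α⌋ - ⌊((n : ℝ) - 1) * α⌋)) :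
    f 1 = ⌊β⌋ - 1 ∧ 1 ≤ f 1 ∧
    (∀ n : ℕ, 1 ≤ n →
      f ⌊(n : ℝ) * α⌋ ∈ ({⌊β⌋ - 2, ⌊β⌋ - 1, ⌊β⌋} : Set ℤ) ∧
      f ⌊(n : ℝ) * β⌋ ∈ ({⌊β⌋ - 2, ⌊β⌋ - 1, ⌊β⌋} : Set ℤ) ∧
      0 ≤ f ⌊(n : ℝ) * α⌋ ∧ 0 ≤ f ⌊(n : ℝ) * β⌋) := by
  have hfa1 : ⌊α⌋ = 1 := by
    rw [Int.floor_eq_iff]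
    constructor <;> push_cast <;> linarith
  have hfb2 : 2 ≤ ⌊β⌋ := by
    have : (2 : ℤ) ≤ ⌊β⌋ ↔ ((2 : ℤ) : ℝ) ≤ β := Int.le_floor
    rw [this]; push_cast; linarith
  -- value bound for each n ≥ 1
  have key : ∀ n : ℕ, 1 ≤ n →
      ⌊β⌋ - 2 ≤ (⌊(n : ℝ) * β⌋ - ⌊((n : ℝ) - 1) * β⌋) - (⌊(n : ℝ) * α⌋ - ⌊((n : ℝ) - 1) * α⌋) ∧
      (⌊(n : ℝ) * β⌋ - ⌊((n : ℝ) - 1) * β⌋) - (⌊(n : ℝ) * α⌋ - ⌊((n : ℝ) - 1) * α⌋) ≤ ⌊β⌋ := by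
    intro n _
    have ea : (n : ℝ) * α = ((n : ℝ) - 1) * α + α := by ring
    have eb : (n : ℝ) * β = ((n : ℝ) - 1) * β + β := by ring
    have ha := floor_add_bounds (((n : ℝ) - 1) * α) α
    have hb := floor_add_bounds (((n : ℝ) - 1) * β) β
    rw [← ea] at ha
    rw [← eb] at hb
    omega
  have hval1 : f 1 = ⌊β⌋ - 1 := by
    have h1a : ⌊(1 : ℝ) * α⌋ = 1 := by rw [one_mul]; exact hfa1
    have := hfa 1 le_rfl
    push_cast at this
    rw [h1a] at this
    rw [this]
    norm_num
  refine ⟨hval1, by omega, ?_⟩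
  intro n hn
  have hk := key n hn
  have ha := hfa n hn
  have hb := hfb n hn
  refine ⟨?_, ?_, by omega, by omega⟩ <;>
  · simp only [Set.mem_insert_iff, Set.mem_singleton_iff]
    omega
end

section
/- Let 1 < α < 2 < β be irrationals with 1/α + 1/β = 1, let aₙ = ⌊nα⌋ and bₙ = ⌊nβ⌋. Then for every n ≥ 1, aₙ = mex{aₖ, bₖ : 0 ≤ k < n} (the least nonnegative integer not among a₀,…,a_{n-1}, b₀,…,b_{n-1}). -/
/-!
Rayleigh's theorem: for irrational `α > 1` with `1/α + 1/β = 1` the positive terms of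
`⌊kα⌋` and `⌊kβ⌋` partition the positive integers. Put `N = ⌊nα⌋`. It is not an earlier term:
`k ↦ ⌊kα⌋` is strictly increasing and no positive term of one sequence occurs in the other.
Every `0 ≤ m < N` is a term `⌊kγ⌋` with `γ ∈ {α, β}`, and since `α < β`,
`kγ < m + 1 ≤ N ≤ nα ≤ nγ` forces `k < n`.
-/

open scoped symmDiff

theorem mex_eq_of_notMem_of_forall_lt_mem {S : Set ℤ} {N : ℤ} (hN : 0 ≤ N) (hNS : N ∉ S)
    (hlt : ∀ m, 0 ≤ m → m < N → m ∈ S) : mex S = N := by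
  lift N to ℕ using hN
  unfold mex
  congr
  refine IsLeast.csInf_eq ⟨hNS, fun m hm => not_lt.1 fun hmN => hm ?_⟩
  exact hlt m (Int.natCast_nonneg m) (by exact_mod_cast hmN)

theorem strictMono_floor_natCast_mul {r : ℝ} (hr : 1 ≤ r) :
    StrictMono fun k : ℕ => ⌊(k : ℝ) * r⌋ := by
  refine strictMono_nat_of_lt_succ fun k => ?_
  have hstep : (k : ℝ) * r + 1 ≤ ((k + 1 : ℕ) : ℝ) * r := by push_cast; linarith
  simpa only [Int.floor_add_one, Int.lt_iff_add_one_le] using Int.floor_le_floor hstep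

theorem lt_of_floor_natCast_mul_lt {r s : ℝ} (hs : 0 < s) (hrs : r ≤ s) {k n : ℕ}
    (h : ⌊(k : ℝ) * s⌋ < ⌊(n : ℝ) * r⌋) : k < n := by
  have hks : (k : ℝ) * s < n * s := calc
    (k : ℝ) * s < ⌊(k : ℝ) * s⌋ + 1 := Int.lt_floor_add_one _
    _ ≤ ⌊(n : ℝ) * r⌋ := by exact_mod_cast h
    _ ≤ n * r := Int.floor_le _
    _ ≤ n * s := by gcongr
  exact_mod_cast lt_of_mul_lt_mul_right hks hs.le

theorem mem_beattySeq_pos_iff {r : ℝ} {j : ℤ} :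
    j ∈ {beattySeq r k | k > 0} ↔ ∃ k : ℕ, 0 < k ∧ ⌊(k : ℝ) * r⌋ = j := by
  constructor
  · rintro ⟨k, hk, rfl⟩
    lift k to ℕ using hk.le
    exact ⟨k, by exact_mod_cast hk, by simp [beattySeq]⟩
  · rintro ⟨k, hk, rfl⟩
    exact ⟨k, by exact_mod_cast hk, by simp [beattySeq]⟩

theorem Irrational.floor_natCast_mul_ne {r s : ℝ} (hrs : r.HolderConjugate s) (hr : Irrational r)
    {k : ℕ} (hk : 0 < k) (m : ℕ) : ⌊(k : ℝ) * r⌋ ≠ ⌊(m : ℝ) * s⌋ := by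
  have hpos : 0 < ⌊(k : ℝ) * r⌋ :=
    Int.floor_pos.2 (one_le_mul_of_one_le_of_one_le (by exact_mod_cast hk) hrs.lt.le)
  intro heq
  rcases Nat.eq_zero_or_pos m with rfl | hm
  · simp [heq] at hpos
  have hmem := (Set.ext_iff.1 (hr.beattySeq_symmDiff_beattySeq_pos hrs) _).2 hpos
  rw [Set.mem_symmDiff, mem_beattySeq_pos_iff, mem_beattySeq_pos_iff] at hmem
  rcases hmem with ⟨-, hnot⟩ | ⟨-, hnot⟩
  · exact hnot ⟨m, hm, heq.symm⟩
  · exact hnot ⟨k, hk, rfl⟩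

theorem Irrational.exists_floor_natCast_mul_eq {r s : ℝ} (hrs : r.HolderConjugate s)
    (hr : Irrational r) {j : ℤ} (hj : 0 ≤ j) :
    ∃ k : ℕ, j = ⌊(k : ℝ) * r⌋ ∨ j = ⌊(k : ℝ) * s⌋ := by
  rcases hj.eq_or_lt with rfl | hj
  · exact ⟨0, by simp⟩
  have hmem := (Set.ext_iff.1 (hr.beattySeq_symmDiff_beattySeq_pos hrs) j).2 hj
  rw [Set.mem_symmDiff, mem_beattySeq_pos_iff, mem_beattySeq_pos_iff] at hmem
  rcases hmem with ⟨⟨k, -, hk⟩, -⟩ | ⟨⟨k, -, hk⟩, -⟩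
  · exact ⟨k, Or.inl hk.symm⟩
  · exact ⟨k, Or.inr hk.symm⟩

theorem stmt_18_general (α β : ℝ) (hiα : Irrational α)
    (h1 : 1 < α) (h2 : α < 2) (h3 : 2 < β) (hab : 1 / α + 1 / β = 1) :
    ∀ n : ℕ, 1 ≤ n →
      ⌊(n : ℝ) * α⌋ =
        mex {x : ℤ | ∃ k < n, x = ⌊(k : ℝ) * α⌋ ∨ x = ⌊(k : ℝ) * β⌋} := by
  intro n hn
  have hαβ : α.HolderConjugate β :=
    Real.holderConjugate_iff.2 ⟨h1, by simpa only [one_div] using hab⟩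
  refine (mex_eq_of_notMem_of_forall_lt_mem (Int.floor_nonneg.2 (by positivity)) ?_ ?_).symm
  · rintro ⟨k, hk, heq | heq⟩
    · exact (strictMono_floor_natCast_mul h1.le hk).ne heq.symm
    · exact hiα.floor_natCast_mul_ne hαβ hn k heq
  · intro m hm hmN
    obtain ⟨k, rfl | rfl⟩ := hiα.exists_floor_natCast_mul_eq hαβ hm
    · exact ⟨k, lt_of_floor_natCast_mul_lt hαβ.pos le_rfl hmN, Or.inl rfl⟩
    · exact ⟨k, lt_of_floor_natCast_mul_lt hαβ.symm.pos (h2.trans h3).le hmN, Or.inr rfl⟩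

theorem stmt_18 (α β : ℝ) (hiα : Irrational α) (hiβ : Irrational β)
    (h1 : 1 < α) (h2 : α < 2) (h3 : 2 < β) (hab : 1 / α + 1 / β = 1) :
    ∀ n : ℕ, 1 ≤ n →
      ⌊(n : ℝ) * α⌋ =
        mex {x : ℤ | ∃ k < n, x = ⌊(k : ℝ) * α⌋ ∨ x = ⌊(k : ℝ) * β⌋} :=
  stmt_18_general α β hiα h1 h2 h3 hab
end

section
/- Let X = {⌊n/{α}⌋ : n ≥ 0} and Y = {⌊n/{β}⌋ : n ≥ 0} where 1 < α < 2 < β are irrationals with 1/α + 1/β = 1. If X = Y, then {α} = {β} and consequently α = (2 - t + √(t²+4))/2 with t = ⌊β⌋ - 1. -/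
/-!
For `0 < a ≤ 1` the map `n ↦ ⌊n / a⌋` is strictly increasing on `ℕ`, and a strictly increasing
map `ℕ → ℤ` is determined by its range. So `X = Y` forces `⌊n / {α}⌋ = ⌊n / {β}⌋` for every `n`,
and letting `n → ∞` separates any two distinct moduli: `{α} = {β}`. Since `⌊α⌋ = 1`, this reads
`β = α - 1 + ⌊β⌋`; substituting into `α + β = αβ` leaves a quadratic for `α` whose larger root,
with `t = ⌊β⌋ - 1`, is `(2 - t + √(t² + 4)) / 2`.
-/

open Set

lemma strictMono_floor_nat_div {a : ℝ} (ha : 0 < a) (ha1 : a ≤ 1) :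
    StrictMono fun n : ℕ => ⌊(n : ℝ) / a⌋ := by
  refine strictMono_nat_of_lt_succ fun n => ?_
  have hstep : (n : ℝ) / a + 1 ≤ ((n + 1 : ℕ) : ℝ) / a := by
    rw [Nat.cast_succ, add_div]
    gcongr
    exact one_le_one_div ha ha1
  have := Int.floor_le_floor hstep
  rw [Int.floor_add_one] at this
  exact Int.add_one_le_iff.mp this

lemma exists_floor_nat_div_lt {a b : ℝ} (ha : 0 < a) (hab : a < b) :
    ∃ n : ℕ, ⌊(n : ℝ) / b⌋ < ⌊(n : ℝ) / a⌋ := by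
  have hgap : 0 < 1 / a - 1 / b := sub_pos.mpr (one_div_lt_one_div_of_lt ha hab)
  obtain ⟨n, hn⟩ := exists_nat_ge (1 / (1 / a - 1 / b))
  refine ⟨n, Int.add_one_le_iff.mp ?_⟩
  rw [← Int.floor_add_one]
  refine Int.floor_le_floor ?_
  have : 1 ≤ (n : ℝ) * (1 / a - 1 / b) := by rwa [← div_le_iff₀ hgap]
  rw [mul_sub, mul_one_div, mul_one_div] at this
  linarith

lemma eq_of_floor_nat_div_eq {a b : ℝ} (ha : 0 < a) (hb : 0 < b)
    (h : ∀ n : ℕ, ⌊(n : ℝ) / a⌋ = ⌊(n : ℝ) / b⌋) : a = b := by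
  rcases lt_trichotomy a b with hab | hab | hab
  · obtain ⟨n, hn⟩ := exists_floor_nat_div_lt ha hab
    exact absurd (h n) hn.ne'
  · exact hab
  · obtain ⟨n, hn⟩ := exists_floor_nat_div_lt hb hab
    exact absurd (h n) hn.ne

lemma eq_of_range_floor_nat_div_eq {a b : ℝ} (ha : 0 < a) (ha1 : a ≤ 1) (hb : 0 < b) (hb1 : b ≤ 1)
    (h : range (fun n : ℕ => ⌊(n : ℝ) / a⌋) = range (fun n : ℕ => ⌊(n : ℝ) / b⌋)) : a = b :=
  eq_of_floor_nat_div_eq ha hb <| congrFun <|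
    ((strictMono_floor_nat_div ha ha1).range_inj (strictMono_floor_nat_div hb hb1)).mp h

lemma fract_eq_sub_one {α : ℝ} (h1 : 1 < α) (h2 : α < 2) : Int.fract α = α - 1 := by
  rw [Int.fract_eq_iff]
  exact ⟨by linarith, by linarith, 1, by push_cast; ring⟩

lemma eq_of_fract_eq {α β : ℝ} (h1 : 1 < α) (h2 : α < 2) (h3 : 2 < β)
    (hab : 1 / α + 1 / β = 1) (hfr : Int.fract α = Int.fract β) :
    α = (2 - ((⌊β⌋ : ℝ) - 1) + Real.sqrt (((⌊β⌋ : ℝ) - 1) ^ 2 + 4)) / 2 := by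
  set t : ℝ := (⌊β⌋ : ℝ) - 1
  have ht : 1 ≤ t := by
    have : (2 : ℤ) ≤ ⌊β⌋ := Int.le_floor.mpr (by push_cast; linarith)
    have : (2 : ℝ) ≤ ⌊β⌋ := by exact_mod_cast this
    linarith
  have hβ : β = α + t := by
    rw [fract_eq_sub_one h1 h2, Int.fract] at hfr
    linarith
  have hsum : α + β = α * β := by
    field_simp at hab
    linarith
  have hquad : α ^ 2 + (t - 2) * α - t = 0 := by
    rw [hβ] at hsum
    linarith
  have hroot : Real.sqrt (t ^ 2 + 4) = 2 * α + t - 2 := by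
    rw [Real.sqrt_eq_iff_mul_self_eq_of_pos (by linarith)]
    linarith
  rw [hroot]
  ring

theorem stmt_19_general (α β : ℝ) (hiβ : Irrational β)
    (h1 : 1 < α) (h2 : α < 2) (h3 : 2 < β) (hab : 1 / α + 1 / β = 1)
    (hXY : {z : ℤ | ∃ n : ℕ, z = ⌊(n : ℝ) / Int.fract α⌋} =
           {z : ℤ | ∃ n : ℕ, z = ⌊(n : ℝ) / Int.fract β⌋}) :
    Int.fract α = Int.fract β ∧
      α = (2 - ((⌊β⌋ : ℝ) - 1) + Real.sqrt (((⌊β⌋ : ℝ) - 1)^2 + 4)) / 2 := by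
  have hα : 0 < Int.fract α := by rw [fract_eq_sub_one h1 h2]; linarith
  have hβ : 0 < Int.fract β := Int.fract_pos.mpr (hiβ.ne_int _)
  have hrange : range (fun n : ℕ => ⌊(n : ℝ) / Int.fract α⌋) =
      range (fun n : ℕ => ⌊(n : ℝ) / Int.fract β⌋) := by
    simpa only [range, eq_comm] using hXY
  have hfr := eq_of_range_floor_nat_div_eq hα (Int.fract_lt_one α).le hβ (Int.fract_lt_one β).le
    hrange
  exact ⟨hfr, eq_of_fract_eq h1 h2 h3 hab hfr⟩

theorem stmt_19 (α β : ℝ) (hiα : Irrational α) (hiβ : Irrational β)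
    (h1 : 1 < α) (h2 : α < 2) (h3 : 2 < β) (hab : 1 / α + 1 / β = 1)
    (hXY : {z : ℤ | ∃ n : ℕ, z = ⌊(n : ℝ) / Int.fract α⌋} =
           {z : ℤ | ∃ n : ℕ, z = ⌊(n : ℝ) / Int.fract β⌋}) :
    Int.fract α = Int.fract β ∧
      α = (2 - ((⌊β⌋ : ℝ) - 1) + Real.sqrt (((⌊β⌋ : ℝ) - 1)^2 + 4)) / 2 :=
  stmt_19_general α β hiβ h1 h2 h3 hab hXY
end
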